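/- arXiv:1910.08717 — 5 statements merged into one kernel-verified Lean document; each statement's English description precedes it below -/
import Mathlib

section
/- Let A and B be nonempty finite subsets of ℝ² such that A lies strictly above the horizontal line y = c, B lies strictly below it, and A ∪ B is in general position. Then there are at most two bridges of (A,B), i.e., at most two pairs (a,b) with a ∈ A and b ∈ B such that the closed segment [a,b] is contained in the frontier of convexHull(A ∪ B). -/
/-!
Each bridge crosses the line `y = c` at a point of the boundary of the hull. In the plane, two
segments of a convex set that cross transversally meet in its interior. By general position,
distinct bridges therefore cross the line at distinct points, and no crossing point lies strictly
between two others, since its bridge would cross the segment joining them transversally. But of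
three distinct points on a line, one lies strictly between the other two.
-/

open Set Module

theorem Set.encard_le_two_of_no_three_distinct {α : Type*} {s : Set α}
    (h : ∀ x ∈ s, ∀ y ∈ s, ∀ z ∈ s, x ≠ y → x ≠ z → y ≠ z → False) : s.encard ≤ 2 := by
  by_contra! hs
  obtain ⟨x, hx⟩ : s.Nonempty := nonempty_of_encard_ne_zero (by rintro h; simp [h] at hs)
  have hrest : 1 < (s \ {x}).encard := by
    contrapose! hs
    calc s.encard = (s \ {x}).encard + 1 := (encard_sdiff_singleton_add_one hx).symm
      _ ≤ 1 + 1 := by gcongr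
      _ = 2 := one_add_one_eq_two
  obtain ⟨y, z, hy, hz, hyz⟩ := one_lt_encard_iff.1 hrest
  exact h x hx y hy.1 z hz.1 (Ne.symm hy.2) (Ne.symm hz.2) hyz

section LevelSets

variable {E : Type*} [AddCommGroup E] [Module ℝ E] (f : E →ₗ[ℝ] ℝ)

theorem exists_mem_openSegment_apply_eq {a b : E} {c : ℝ} (ha : c < f a) (hb : f b < c) :
    ∃ x ∈ openSegment ℝ a b, f x = c := by
  refine ⟨AffineMap.lineMap a b ((f a - c) / (f a - f b)), ?_, ?_⟩
  · rw [openSegment_eq_image_lineMap]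
    exact mem_image_of_mem _
      ⟨div_pos (by linarith) (by linarith), (div_lt_one (by linarith)).2 (by linarith)⟩
  · have : f a - f b ≠ 0 := by linarith
    rw [AffineMap.lineMap_apply_module, map_add, map_smul, map_smul, smul_eq_mul, smul_eq_mul]
    field_simp
    ring

theorem not_collinear_of_mem_affineSpan_pair {a b u x : E} (hx : x ∈ line[ℝ, a, b])
    (hux : u ≠ x) (hu : f u = f x) (ha : f a ≠ f x) : ¬ Collinear ℝ {a, b, u} := by
  intro hcol
  have hx' : x ∈ affineSpan ℝ {a, b, u} :=
    affineSpan_mono ℝ (by simp [insert_subset_iff]) hx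
  have hcol' : Collinear ℝ {u, x, a} :=
    ((collinear_insert_iff_of_mem_affineSpan hx').2 hcol).subset (by simp [insert_subset_iff])
  obtain ⟨r, rfl⟩ := mem_affineSpan_pair_iff_exists_lineMap_eq.1
    (hcol'.mem_affineSpan_of_mem_of_ne (p₃ := a) (by simp) (by simp) (by simp) hux)
  apply ha
  rw [AffineMap.lineMap_apply_module, map_add, map_smul, map_smul, smul_eq_mul, smul_eq_mul, hu]
  ring

theorem collinear_of_apply_eq (hE : finrank ℝ E = 2) (hf : f ≠ 0) {x y z : E}
    (hy : f y = f x) (hz : f z = f x) : Collinear ℝ {x, y, z} := by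
  have := Module.finite_of_finrank_eq_succ hE
  have hker : finrank ℝ (LinearMap.ker f) = 1 := by
    have := Module.Dual.finrank_ker_add_one_of_ne_zero hf
    omega
  have hlevel : ∀ p ∈ ({x, y, z} : Set E), f p = f x := by simp [hy, hz]
  have hspan : vectorSpan ℝ {x, y, z} ≤ LinearMap.ker f := by
    rw [vectorSpan_def, Submodule.span_le]
    rintro _ ⟨p, hp, q, hq, rfl⟩
    simp [hlevel p hp, hlevel q hq]
  rw [collinear_iff_finrank_le_one, ← hker]
  exact Submodule.finrank_mono hspan

end LevelSets

section Interior

variable {E : Type*} [NormedAddCommGroup E] [NormedSpace ℝ E]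

theorem AffineIndependent.affineCombination_mem_interior_convexHull {ι : Type*} [Fintype ι]
    {p : ι → E} (hp : AffineIndependent ℝ p) (hspan : affineSpan ℝ (range p) = ⊤) {w : ι → ℝ}
    (hw : ∑ i, w i = 1) (hpos : ∀ i, 0 < w i) :
    Finset.univ.affineCombination ℝ p w ∈ interior (convexHull ℝ (range p)) := by
  let b : AffineBasis ι ℝ E := ⟨p, hp, hspan⟩
  change Finset.univ.affineCombination ℝ b w ∈ interior (convexHull ℝ (range b))
  rw [b.interior_convexHull]
  intro i
  rw [b.coord_apply_combination_of_mem (Finset.mem_univ i) hw]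
  exact hpos i

theorem Convex.mem_interior_of_mem_openSegment_of_mem_openSegment (hE : finrank ℝ E = 2)
    {s : Set E} (hs : Convex ℝ s) {a b u v x : E} (ha : a ∈ s) (hb : b ∈ s) (hu : u ∈ s)
    (hv : v ∈ s) (habu : ¬ Collinear ℝ {a, b, u}) (hxab : x ∈ openSegment ℝ a b)
    (hxuv : x ∈ openSegment ℝ u v) : x ∈ interior s := by
  have := Module.finite_of_finrank_eq_succ hE
  obtain ⟨α, β, hα, hβ, hαβ, rfl⟩ := hxab
  obtain ⟨γ, δ, hγ, hδ, hγδ, hx⟩ := hxuv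
  have hind : AffineIndependent ℝ ![a, b, u] := affineIndependent_iff_not_collinear_set.2 habu
  have hspan : affineSpan ℝ (range ![a, b, u]) = ⊤ := by
    rw [hind.affineSpan_eq_top_iff_card_eq_finrank_add_one, hE]
    rfl
  -- The midpoint of `u` and `x` lies inside the triangle `a b u`, and `x` lies strictly between
  -- it and `v`.
  have hw : ∑ i, ![α / 2, β / 2, 1 / 2] i = 1 := by
    simp only [Fin.sum_univ_three, Matrix.cons_val_zero, Matrix.cons_val_one, Matrix.cons_val]
    linarith
  have hy : (α / 2) • a + (β / 2) • b + (1 / 2 : ℝ) • u ∈ interior s := by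
    have := hind.affineCombination_mem_interior_convexHull hspan hw
      (by intro i; fin_cases i <;> simp <;> positivity)
    rw [Finset.affineCombination_eq_linear_combination _ _ _ hw] at this
    simp only [Fin.sum_univ_three] at this
    refine interior_mono (convexHull_min ?_ hs) this
    simp [insert_subset_iff, ha, hb, hu]
  refine hs.openSegment_interior_self_subset_interior hy hv
    ⟨2 * γ / (1 + γ), δ / (1 + γ), by positivity, by positivity, ?_, ?_⟩
  · field_simp
    linarith
  · calc (2 * γ / (1 + γ)) • ((α / 2) • a + (β / 2) • b + (1 / 2 : ℝ) • u) + (δ / (1 + γ)) • v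
        = (γ / (1 + γ)) • (α • a + β • b) + (1 / (1 + γ)) • (γ • u + δ • v) := by module
      _ = α • a + β • b := by
        rw [hx, ← add_smul, ← add_div, add_comm γ, div_self (by positivity), one_smul]

section Bridges

variable {E : Type*} [NormedAddCommGroup E] [NormedSpace ℝ E]

def InGeneralPosition (S : Set E) : Prop :=
  ∀ p ∈ S, ∀ q ∈ S, ∀ r ∈ S, p ≠ q → q ≠ r → p ≠ r → ¬ Collinear ℝ {p, q, r}

def bridges (A B : Set E) : Set (E × E) :=
  {ab | ab.1 ∈ A ∧ ab.2 ∈ B ∧ segment ℝ ab.1 ab.2 ⊆ frontier (convexHull ℝ (A ∪ B))}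

variable {A B : Set E}

theorem notMem_interior_of_mem_bridges {a b x : E} (hab : (a, b) ∈ bridges A B)
    (hx : x ∈ openSegment ℝ a b) : x ∉ interior (convexHull ℝ (A ∪ B)) :=
  (hab.2.2 (openSegment_subset_segment ℝ a b hx)).2

theorem eq_of_mem_openSegment_of_mem_bridges (hE : finrank ℝ E = 2)
    (hgen : InGeneralPosition (A ∪ B)) (hAB : Disjoint A B) {a b a' b' x : E}
    (hab : (a, b) ∈ bridges A B) (ha' : a' ∈ A) (hb' : b' ∈ B) (hx : x ∈ openSegment ℝ a b)
    (hx' : x ∈ openSegment ℝ a' b') : a' = a ∧ b' = b := by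
  have ha : a ∈ A := hab.1
  have hb : b ∈ B := hab.2.1
  have hH : A ∪ B ⊆ convexHull ℝ (A ∪ B) := subset_convexHull ℝ _
  have hcol : ∀ u ∈ A ∪ B, ∀ v ∈ A ∪ B, x ∈ openSegment ℝ u v → Collinear ℝ {a, b, u} :=
    fun u hu v hv hxuv ↦ by_contra fun habu ↦ notMem_interior_of_mem_bridges hab hx <|
      (convex_convexHull ℝ _).mem_interior_of_mem_openSegment_of_mem_openSegment hE
        (hH (.inl ha)) (hH (.inr hb)) (hH hu) (hH hv) habu hx hxuv
  have hne : ∀ {p q}, p ∈ A → q ∈ B → p ≠ q := fun hp hq ↦ hAB.ne_of_mem hp hq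
  constructor
  · by_contra h
    exact hgen a (.inl ha) b (.inr hb) a' (.inl ha') (hne ha hb) (hne ha' hb).symm (Ne.symm h)
      (hcol a' (.inl ha') b' (.inr hb') hx')
  · by_contra h
    exact hgen a (.inl ha) b (.inr hb) b' (.inr hb') (hne ha hb) (Ne.symm h) (hne ha hb')
      (hcol b' (.inr hb') a' (.inl ha') (openSegment_symm ℝ a' b' ▸ hx'))

theorem not_sbtw_of_mem_bridges (hE : finrank ℝ E = 2) (f : E →ₗ[ℝ] ℝ) {a b x u v : E}
    (hab : (a, b) ∈ bridges A B) (hx : x ∈ openSegment ℝ a b)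
    (hu : u ∈ convexHull ℝ (A ∪ B)) (hv : v ∈ convexHull ℝ (A ∪ B))
    (hfu : f u = f x) (hfa : f a ≠ f x) : ¬ Sbtw ℝ u x v := by
  intro hsbtw
  have hxuv : x ∈ openSegment ℝ u v := openSegment_eq_image_lineMap ℝ u v ▸ hsbtw.mem_image_Ioo
  have hxline : x ∈ line[ℝ, a, b] := by
    obtain ⟨t, -, rfl⟩ := openSegment_eq_image_lineMap ℝ a b ▸ hx
    exact AffineMap.lineMap_mem_affineSpan_pair t a b
  have habu := not_collinear_of_mem_affineSpan_pair f hxline hsbtw.ne_left.symm hfu hfa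
  exact notMem_interior_of_mem_bridges hab hx <|
    (convex_convexHull ℝ _).mem_interior_of_mem_openSegment_of_mem_openSegment hE
      (subset_convexHull ℝ _ (.inl hab.1)) (subset_convexHull ℝ _ (.inr hab.2.1)) hu hv habu
      hx hxuv

end Bridges

theorem encard_bridges_le_two {E : Type*} [NormedAddCommGroup E] [NormedSpace ℝ E]
    (hE : finrank ℝ E = 2) (f : E →ₗ[ℝ] ℝ) {A B : Set E} {c : ℝ}
    (hA : ∀ p ∈ A, c < f p) (hB : ∀ p ∈ B, f p < c) (hgen : InGeneralPosition (A ∪ B)) :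
    (bridges A B).encard ≤ 2 := by
  have hAB : Disjoint A B :=
    disjoint_left.2 fun p hpA hpB ↦ (hA p hpA).not_gt (hB p hpB)
  have hcross : ∀ p ∈ bridges A B, ∃ x ∈ openSegment ℝ p.1 p.2, f x = c :=
    fun p hp ↦ exists_mem_openSegment_apply_eq f (hA _ hp.1) (hB _ hp.2.1)
  have hH : ∀ p ∈ bridges A B, ∀ x ∈ openSegment ℝ p.1 p.2, x ∈ convexHull ℝ (A ∪ B) :=
    fun p hp ↦ (convex_convexHull ℝ _).openSegment_subset
      (subset_convexHull ℝ _ (.inl hp.1)) (subset_convexHull ℝ _ (.inr hp.2.1))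
  have hinj : ∀ p ∈ bridges A B, ∀ q ∈ bridges A B, p ≠ q → ∀ x ∈ openSegment ℝ p.1 p.2,
      ∀ y ∈ openSegment ℝ q.1 q.2, x ≠ y := by
    rintro p hp q hq hpq x hx y hy rfl
    obtain ⟨h1, h2⟩ := eq_of_mem_openSegment_of_mem_bridges hE hgen hAB hp hq.1 hq.2.1 hx hy
    exact hpq (Prod.ext h1 h2).symm
  refine Set.encard_le_two_of_no_three_distinct fun p hp q hq r hr hpq hpr hqr ↦ ?_
  obtain ⟨x, hx, hfx⟩ := hcross p hp
  obtain ⟨y, hy, hfy⟩ := hcross q hq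
  obtain ⟨z, hz, hfz⟩ := hcross r hr
  have hf : f ≠ 0 := fun h ↦ by simpa [h] using (hB _ hp.2.1).trans (hA _ hp.1)
  have hxy := hinj p hp q hq hpq x hx y hy
  have hxz := hinj p hp r hr hpr x hx z hz
  have hyz := hinj q hq r hr hqr y hy z hz
  have hcol := collinear_of_apply_eq f hE hf (hfy.trans hfx.symm) (hfz.trans hfx.symm)
  rcases hcol.wbtw_or_wbtw_or_wbtw with h | h | h
  · exact not_sbtw_of_mem_bridges hE f hq hy (hH p hp x hx) (hH r hr z hz)
      (hfx.trans hfy.symm) (by linarith [hA _ hq.1]) ⟨h, hxy.symm, hyz⟩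
  · exact not_sbtw_of_mem_bridges hE f hr hz (hH q hq y hy) (hH p hp x hx)
      (hfy.trans hfz.symm) (by linarith [hA _ hr.1]) ⟨h, hyz.symm, hxz.symm⟩
  · exact not_sbtw_of_mem_bridges hE f hp hx (hH r hr z hz) (hH q hq y hy)
      (hfz.trans hfx.symm) (by linarith [hA _ hp.1]) ⟨h, hxz, hxy⟩

theorem bridges_le_two_general
    (A B : Set (EuclideanSpace ℝ (Fin 2))) (c : ℝ)
    (hAabove : ∀ p ∈ A, c < p 1)
    (hBbelow : ∀ p ∈ B, p 1 < c)
    (hgen : ∀ p ∈ A ∪ B, ∀ q ∈ A ∪ B, ∀ r ∈ A ∪ B, p ≠ q → q ≠ r → p ≠ r →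
      ¬ Collinear ℝ ({p, q, r} : Set (EuclideanSpace ℝ (Fin 2)))) :
    {ab : EuclideanSpace ℝ (Fin 2) × EuclideanSpace ℝ (Fin 2) |
        ab.1 ∈ A ∧ ab.2 ∈ B ∧
          segment ℝ ab.1 ab.2 ⊆ frontier (convexHull ℝ (A ∪ B))}.encard ≤ 2 :=
  encard_bridges_le_two finrank_euclideanSpace_fin (EuclideanSpace.proj 1).toLinearMap
    hAabove hBbelow hgen

/-- If `A` lies strictly above the line `y = c`, `B` lies strictly below it, and
`A ∪ B` is in general position, then there are at most two bridges of `(A, B)`: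
pairs `(a, b) ∈ A × B` whose segment lies on the boundary of `convexHull (A ∪ B)`. -/
theorem bridges_le_two
    (A B : Set (EuclideanSpace ℝ (Fin 2))) (c : ℝ)
    (hAfin : A.Finite) (hBfin : B.Finite)
    (hAne : A.Nonempty) (hBne : B.Nonempty)
    (hAabove : ∀ p ∈ A, c < p 1)
    (hBbelow : ∀ p ∈ B, p 1 < c)
    (hgen : ∀ p ∈ A ∪ B, ∀ q ∈ A ∪ B, ∀ r ∈ A ∪ B, p ≠ q → q ≠ r → p ≠ r →
      ¬ Collinear ℝ ({p, q, r} : Set (EuclideanSpace ℝ (Fin 2)))) :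
    {ab : EuclideanSpace ℝ (Fin 2) × EuclideanSpace ℝ (Fin 2) |
        ab.1 ∈ A ∧ ab.2 ∈ B ∧
          segment ℝ ab.1 ab.2 ⊆ frontier (convexHull ℝ (A ∪ B))}.encard ≤ 2 :=
  bridges_le_two_general A B c hAabove hBbelow hgen
end Interior
end

section
/- Let K₁ and K₂ be nonempty compact convex subsets of ℝ² such that convexHull(K₁ ∪ K₂) has nonempty interior. Then every point x of the frontier of convexHull(K₁ ∪ K₂) satisfies at least one of the following: x lies in the frontier of K₁; x lies in the frontier of K₂; or there exist p ∈ K₁ and q ∈ K₂ such that x lies on the closed segment [p,q] and [p,q] is contained in the frontier of convexHull(K₁ ∪ K₂). -/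
/-!
The hull `C` of `K₁ ∪ K₂` is the union of the segments `[p, q]` with `p ∈ K₁`, `q ∈ K₂`, and it is
compact, so a boundary point `x` of `C` lies on such a segment. If `x` is an endpoint, it is a
point of `K₁` (or `K₂`) outside the interior of the larger set `C`. Otherwise `x` is an inner point
of `[p, q]`; if some `y ∈ [p, q]` were interior to `C`, then `x`, lying strictly between `y` and
`p` or `q`, would be interior too.
-/

open Set AffineMap

section Segment

variable {𝕜 E : Type*} [Field 𝕜] [LinearOrder 𝕜] [IsStrictOrderedRing 𝕜]
  [AddCommGroup E] [Module 𝕜 E] [TopologicalSpace E]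
  [IsTopologicalAddGroup E] [ContinuousConstSMul 𝕜 E]

theorem Convex.segment_subset_frontier_of_mem_openSegment {s : Set E} (hs : Convex 𝕜 s)
    {p q x : E} (hp : p ∈ closure s) (hq : q ∈ closure s) (hx : x ∈ openSegment 𝕜 p q)
    (hxs : x ∉ interior s) : segment 𝕜 p q ⊆ frontier s := by
  intro y hy
  refine ⟨hs.closure.segment_subset hp hq hy, fun hy_int => hxs ?_⟩
  have hy_line : y ∈ range (lineMap p q : 𝕜 → E) := by
    rw [segment_eq_image_lineMap] at hy
    exact image_subset_range _ _ hy
  rcases openSegment_subset_union p q hy_line hx with rfl | hx_py | hx_yq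
  · exact hy_int
  · exact hs.openSegment_closure_interior_subset_interior hp hy_int hx_py
  · exact hs.openSegment_interior_closure_subset_interior hy_int hq hx_yq

end Segment

section Join

variable {𝕜 E : Type*} [Ring 𝕜] [PartialOrder 𝕜] [IsOrderedRing 𝕜] [AddCommGroup E] [Module 𝕜 E]

theorem convexJoin_eq_image_lineMap (s t : Set E) :
    convexJoin 𝕜 s t =
      (fun z : 𝕜 × E × E => lineMap z.2.1 z.2.2 z.1) '' (Icc 0 1 ×ˢ s ×ˢ t) := by
  ext x
  simp only [mem_convexJoin, segment_eq_image_lineMap, mem_image, mem_prod, Prod.exists]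
  exact ⟨fun ⟨p, hp, q, hq, θ, hθ, hx⟩ => ⟨θ, p, q, ⟨hθ, hp, hq⟩, hx⟩,
    fun ⟨θ, p, q, ⟨hθ, hp, hq⟩, hx⟩ => ⟨p, hp, q, hq, θ, hθ, hx⟩⟩

theorem IsCompact.convexJoin [TopologicalSpace 𝕜] [CompactIccSpace 𝕜] [TopologicalSpace E]
    [IsTopologicalAddGroup E] [ContinuousSMul 𝕜 E] {s t : Set E} (hs : IsCompact s)
    (ht : IsCompact t) : IsCompact (convexJoin 𝕜 s t) := by
  rw [convexJoin_eq_image_lineMap]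
  exact (isCompact_Icc.prod (hs.prod ht)).image (by fun_prop)

end Join

theorem mem_frontier_of_mem_of_notMem_interior {X : Type*} [TopologicalSpace X] {s t : Set X}
    {x : X} (hx : x ∈ s) (hst : s ⊆ t) (hxt : x ∉ interior t) : x ∈ frontier s :=
  ⟨subset_closure hx, fun hxs => hxt (interior_mono hst hxs)⟩

theorem frontier_convexHull_union_structure_general
    (K₁ K₂ : Set (EuclideanSpace ℝ (Fin 2)))
    (hK₁c : IsCompact K₁) (hK₂c : IsCompact K₂)
    (hK₁ : Convex ℝ K₁) (hK₂ : Convex ℝ K₂)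
    (hK₁ne : K₁.Nonempty) (hK₂ne : K₂.Nonempty)
    (x : EuclideanSpace ℝ (Fin 2))
    (hx : x ∈ frontier (convexHull ℝ (K₁ ∪ K₂))) :
    x ∈ frontier K₁ ∨ x ∈ frontier K₂ ∨
      ∃ p ∈ K₁, ∃ q ∈ K₂, x ∈ segment ℝ p q ∧
        segment ℝ p q ⊆ frontier (convexHull ℝ (K₁ ∪ K₂)) := by
  rw [hK₁.convexHull_union hK₂ hK₁ne hK₂ne] at hx ⊢
  have hx_int : x ∉ interior (convexJoin ℝ K₁ K₂) := hx.2
  obtain ⟨p, hp, q, hq, hx_pq⟩ :=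
    mem_convexJoin.1 ((hK₁c.convexJoin hK₂c).isClosed.frontier_subset hx)
  by_cases hxp : x = p
  · subst hxp
    exact Or.inl (mem_frontier_of_mem_of_notMem_interior hp (subset_convexJoin_left hK₂ne) hx_int)
  by_cases hxq : x = q
  · subst hxq
    exact Or.inr (Or.inl
      (mem_frontier_of_mem_of_notMem_interior hq (subset_convexJoin_right hK₁ne) hx_int))
  have hp_C : p ∈ convexJoin ℝ K₁ K₂ := subset_convexJoin_left hK₂ne hp
  have hq_C : q ∈ convexJoin ℝ K₁ K₂ := subset_convexJoin_right hK₁ne hq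
  exact Or.inr (Or.inr ⟨p, hp, q, hq, hx_pq,
    (hK₁.convexJoin hK₂).segment_subset_frontier_of_mem_openSegment
      (subset_closure hp_C) (subset_closure hq_C)
      (mem_openSegment_of_ne_left_right (Ne.symm hxp) (Ne.symm hxq) hx_pq) hx_int⟩)

/-- Every boundary point of the convex hull of the union of two nonempty compact
convex sets `K₁, K₂` (whose hull has nonempty interior) lies on the boundary of
`K₁`, on the boundary of `K₂`, or on a "bridge" segment joining a point of `K₁`
to a point of `K₂` that is entirely contained in the boundary of the hull. -/
theorem frontier_convexHull_union_structure
    (K₁ K₂ : Set (EuclideanSpace ℝ (Fin 2)))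
    (hK₁c : IsCompact K₁) (hK₂c : IsCompact K₂)
    (hK₁ : Convex ℝ K₁) (hK₂ : Convex ℝ K₂)
    (hK₁ne : K₁.Nonempty) (hK₂ne : K₂.Nonempty)
    (hint : (interior (convexHull ℝ (K₁ ∪ K₂))).Nonempty)
    (x : EuclideanSpace ℝ (Fin 2))
    (hx : x ∈ frontier (convexHull ℝ (K₁ ∪ K₂))) :
    x ∈ frontier K₁ ∨ x ∈ frontier K₂ ∨
      ∃ p ∈ K₁, ∃ q ∈ K₂, x ∈ segment ℝ p q ∧
        segment ℝ p q ⊆ frontier (convexHull ℝ (K₁ ∪ K₂)) :=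
  frontier_convexHull_union_structure_general K₁ K₂ hK₁c hK₂c hK₁ hK₂ hK₁ne hK₂ne x hx
end

section
/- Let K ⊆ ℝ² be a convex set with nonempty interior and let n ∈ ℝ² be a nonzero vector. Then there are at most two real numbers t such that the line {x ∈ ℝ² : ⟨x, n⟩ = t} contains a nondegenerate closed segment that is contained in the frontier of K. In other words, at most two distinct lines of any fixed direction contain a nondegenerate segment of the boundary of K. -/
/-!
An interior point `w` of `K` cannot lie on the line of a frontier segment `[p, q]`: of three
collinear points one lies between the other two, and either `w ∈ [p, q] ⊆ frontier K`, or an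
endpoint lies strictly between `w` and a point of `closure K` and is therefore interior.
In the plane that line is a whole level set of `⟪·, n⟫`. If three levels `t₁ < t₂ < t₃` carried
frontier segments, then joining an interior point to a closure point on level `t₁` or `t₃` by an
open segment of interior points would put an interior point on level `t₂`.
-/

open scoped RealInnerProductSpace

open Module

theorem Set.encard_le_two_of_forall_not_lt_lt {α : Type*} [LinearOrder α] {s : Set α}
    (h : ∀ a ∈ s, ∀ b ∈ s, ∀ c ∈ s, a < b → ¬b < c) : s.encard ≤ 2 := by
  by_contra! hs
  obtain ⟨t, hts, ht⟩ := s.exists_subset_encard_eq (Order.add_one_le_of_lt hs)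
  have hfin : t.Finite := Set.finite_of_encard_eq_coe ht
  have hcard : hfin.toFinset.card = 3 := by
    rw [hfin.encard_eq_coe_toFinset_card] at ht
    exact_mod_cast ht
  set e := hfin.toFinset.orderEmbOfFin hcard
  have he : ∀ i, e i ∈ s := fun i =>
    hts (hfin.mem_toFinset.1 (hfin.toFinset.orderEmbOfFin_mem hcard i))
  exact h _ (he 0) _ (he 1) _ (he 2) (e.strictMono (by decide)) (e.strictMono (by decide))

section Convex

variable {𝕜 E F : Type*} [Field 𝕜] [LinearOrder 𝕜] [IsStrictOrderedRing 𝕜]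
  [AddCommGroup E] [Module 𝕜 E] [TopologicalSpace E] [IsTopologicalAddGroup E]
  [ContinuousConstSMul 𝕜 E] {K : Set E}

theorem Convex.exists_mem_interior_map_eq [AddCommGroup F] [Module 𝕜 F] (hK : Convex 𝕜 K)
    {z x : E} (hz : z ∈ interior K) (hx : x ∈ closure K) (f : E →ᵃ[𝕜] F) {c : F}
    (hc : c ∈ openSegment 𝕜 (f z) (f x)) : ∃ w ∈ interior K, f w = c := by
  rw [← image_openSegment] at hc
  obtain ⟨w, hw, rfl⟩ := hc
  exact ⟨w, hK.openSegment_interior_closure_subset_interior hz hx hw, rfl⟩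

theorem Convex.exists_mem_interior_map_eq_of_lt_of_lt (hK : Convex 𝕜 K)
    (hint : (interior K).Nonempty) {x y : E} (hx : x ∈ closure K) (hy : y ∈ closure K)
    (f : E →ᵃ[𝕜] 𝕜) {c : 𝕜} (hxc : f x < c) (hcy : c < f y) : ∃ w ∈ interior K, f w = c := by
  obtain ⟨z, hz⟩ := hint
  rcases lt_trichotomy (f z) c with hzc | rfl | hcz
  · refine hK.exists_mem_interior_map_eq hz hy f ?_
    rw [openSegment_eq_Ioo (hzc.trans hcy)]
    exact ⟨hzc, hcy⟩
  · exact ⟨z, hz, rfl⟩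
  · refine hK.exists_mem_interior_map_eq hz hx f ?_
    rw [openSegment_symm, openSegment_eq_Ioo (hxc.trans hcz)]
    exact ⟨hxc, hcz⟩

theorem Convex.not_collinear_of_segment_subset_frontier (hK : Convex 𝕜 K) {w p q : E}
    (hw : w ∈ interior K) (hpq : p ≠ q) (hfr : segment 𝕜 p q ⊆ frontier K) :
    ¬Collinear 𝕜 {w, p, q} := by
  have hp := hfr (left_mem_segment 𝕜 p q)
  have hq := hfr (right_mem_segment 𝕜 p q)
  have not_wbtw : ∀ {a b : E}, a ∈ frontier K → b ∈ frontier K → a ≠ b → ¬Wbtw 𝕜 w a b := by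
    intro a b ha hb hab hwab
    have hwa : w ≠ a := fun h => ha.2 (h ▸ hw)
    exact ha.2 (hK.openSegment_interior_closure_subset_interior hw (frontier_subset_closure hb)
      (mem_openSegment_of_ne_left_right hwa hab.symm hwab.mem_segment))
  intro hcol
  rcases hcol.wbtw_or_wbtw_or_wbtw with h | h | h
  · exact not_wbtw hp hq hpq h
  · exact not_wbtw hq hp hpq.symm h.symm
  · exact (hfr (segment_symm 𝕜 q p ▸ h.mem_segment)).2 hw

end Convex

section InnerProductSpace

variable {E : Type*} [NormedAddCommGroup E] [InnerProductSpace ℝ E] [Fact (finrank ℝ E = 2)]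

theorem collinear_of_subset_inner_eq {n : E} (hn : n ≠ 0) {t : ℝ} {s : Set E}
    (hs : s ⊆ {x | ⟪x, n⟫ = t}) : Collinear ℝ s := by
  have : FiniteDimensional ℝ E := .of_fact_finrank_eq_succ 1
  have hspan : vectorSpan ℝ s ≤ (ℝ ∙ n)ᗮ := by
    refine Submodule.span_le.2 ?_
    rintro _ ⟨a, ha, b, hb, rfl⟩
    rw [SetLike.mem_coe, Submodule.mem_orthogonal_singleton_iff_inner_right, real_inner_comm]
    change ⟪a - b, n⟫ = 0
    rw [inner_sub_left, hs ha, hs hb, sub_self]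
  rw [collinear_iff_finrank_le_one]
  exact (Submodule.finrank_mono hspan).trans (Submodule.finrank_orthogonal_span_singleton hn).le

theorem Convex.inner_ne_of_segment_subset_frontier {K : Set E} (hK : Convex ℝ K) {n : E}
    (hn : n ≠ 0) {t : ℝ} {p q w : E} (hpq : p ≠ q) (hfr : segment ℝ p q ⊆ frontier K)
    (hlev : segment ℝ p q ⊆ {x | ⟪x, n⟫ = t}) (hw : w ∈ interior K) : ⟪w, n⟫ ≠ t := fun hwt =>
  hK.not_collinear_of_segment_subset_frontier hw hpq hfr <| collinear_of_subset_inner_eq hn <|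
    Set.insert_subset hwt <|
      Set.pair_subset (hlev (left_mem_segment ℝ p q)) (hlev (right_mem_segment ℝ p q))

end InnerProductSpace

/-- For a convex set `K` with nonempty interior and a nonzero vector `n`, at most
two lines orthogonal to `n` (i.e. of the form `{x | ⟪x, n⟫ = t}`) contain a
nondegenerate segment of the frontier of `K`. -/
theorem lines_containing_frontier_segment_encard_le_two
    (K : Set (EuclideanSpace ℝ (Fin 2))) (hK : Convex ℝ K)
    (hint : (interior K).Nonempty)
    (n : EuclideanSpace ℝ (Fin 2)) (hn : n ≠ 0) :
    {t : ℝ | ∃ p q : EuclideanSpace ℝ (Fin 2), p ≠ q ∧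
        segment ℝ p q ⊆ frontier K ∧
        segment ℝ p q ⊆ {x : EuclideanSpace ℝ (Fin 2) | ⟪x, n⟫ = t}}.encard ≤ 2 := by
  have : Fact (finrank ℝ (EuclideanSpace ℝ (Fin 2)) = 2) := ⟨finrank_euclideanSpace_fin⟩
  refine Set.encard_le_two_of_forall_not_lt_lt ?_
  rintro t₁ ⟨p₁, q₁, -, hfr₁, hlev₁⟩ t₂ ⟨p, q, hpq, hfr, hlev⟩ t₃ ⟨p₃, q₃, -, hfr₃, hlev₃⟩ h₁₂ h₂₃
  obtain ⟨w, hw, hwt⟩ := hK.exists_mem_interior_map_eq_of_lt_of_lt hint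
    (frontier_subset_closure (hfr₁ (left_mem_segment ℝ p₁ q₁)))
    (frontier_subset_closure (hfr₃ (left_mem_segment ℝ p₃ q₃)))
    (innerSLFlip ℝ n).toLinearMap.toAffineMap
    ((hlev₁ (left_mem_segment ℝ p₁ q₁)).trans_lt h₁₂)
    (h₂₃.trans_eq (hlev₃ (left_mem_segment ℝ p₃ q₃)).symm)
  exact hK.inner_ne_of_segment_subset_frontier hn hpq hfr hlev hw hwt
end

section
/- Let A and B be finite subsets of ℝ² such that convexHull(A) and convexHull(B) both have nonempty interior, and suppose no nondegenerate closed segment is contained in frontier(convexHull(A)) ∩ frontier(convexHull(B)). Then frontier(convexHull(A)) ∩ frontier(convexHull(B)) is a finite set with at most 2·|A| points. -/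
/-!
Write `K = conv A` and `P = ∂K ∩ ∂(conv B)`. If a point of `P` lay strictly between two other
points of `P`, convexity would put the whole segment between them into both frontiers; so, on any
segment, every point of `P` has a side free of other points of `P`.

A point `x ∈ P \ A` is not an extreme point of `K`, so it lies on an edge of `K` (a maximal segment
in `∂K`), and the endpoints of edges are extreme points, hence in `A`. Charge `x` to the endpoint
`w` of its edge on its free side, and a point of `P ∩ A` to itself. A point `w` charged by some
`x ∉ A` is not in `P`, and it is charged at most once along each edge at `w`. In the plane at most
two edges of a convex set issue from one point, since three frontier segments from a point would
force a point of one of them, or the point itself, into the interior. So every point of `A` is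
charged at most twice.
-/

open Set AffineMap

theorem Set.finite_and_ncard_le_mul_of_fibers {α β : Type*} {f : α → β} {s : Set α} {t : Set β}
    (ht : t.Finite) (hf : MapsTo f s t) {n : ℕ} (hn : ∀ b ∈ t, (s ∩ f ⁻¹' {b}).encard ≤ n) :
    s.Finite ∧ s.ncard ≤ n * t.ncard := by
  classical
  have hs : s.Finite := by
    refine (ht.biUnion fun b hb => finite_of_encard_le_coe (hn b hb)).subset fun x hx => ?_
    exact mem_biUnion (hf hx) ⟨hx, rfl⟩
  refine ⟨hs, ?_⟩
  rw [ncard_eq_toFinset_card s hs, ncard_eq_toFinset_card t ht]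
  refine Finset.card_le_mul_card_image_of_maps_to
    (fun x hx => by simpa using hf (by simpa using hx)) n fun b hb => ?_
  have hfib : ((hs.toFinset.filter fun x => f x = b : Finset α) : Set α) = s ∩ f ⁻¹' {b} := by
    ext; simp
  have := hfib ▸ hn b (by simpa using hb)
  exact_mod_cast this

section Segment

variable {E : Type*} [AddCommGroup E] [Module ℝ E]

theorem wbtw_or_wbtw_of_mem_segment {p r x y : E} (hx : x ∈ segment ℝ p r)
    (hy : y ∈ segment ℝ p r) : Wbtw ℝ p x y ∨ Wbtw ℝ p y x := by
  rw [segment_eq_image_lineMap] at hx hy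
  obtain ⟨s, hs, rfl⟩ := hx
  obtain ⟨t, ht, rfl⟩ := hy
  simpa only [lineMap_apply] using wbtw_or_wbtw_smul_vadd_of_nonneg p (r -ᵥ p) hs.1 ht.1

theorem mem_openSegment_or_of_mem_segment {p q r y : E} (hq : q ∈ openSegment ℝ p r)
    (hy : y ∈ segment ℝ p r) (hqy : q ≠ y) :
    q ∈ openSegment ℝ p y ∨ q ∈ openSegment ℝ y r := by
  have hpr : p ≠ r := by
    rintro rfl
    rw [openSegment_same] at hq
    rw [segment_same] at hy
    exact hqy (hq.trans hy.symm)
  have hqp : p ≠ q := by rintro rfl; exact hpr (left_mem_openSegment_iff.1 hq)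
  have hqr : r ≠ q := by rintro rfl; exact hpr (right_mem_openSegment_iff.1 hq)
  have hpqr : Wbtw ℝ p q r := mem_segment_iff_wbtw.1 (openSegment_subset_segment ℝ p r hq)
  rcases wbtw_or_wbtw_of_mem_segment hy (openSegment_subset_segment ℝ p r hq) with h | h
  · exact .inr (mem_openSegment_of_ne_left_right (Ne.symm hqy) hqr
      (mem_segment_iff_wbtw.2 (hpqr.trans_left_right h)))
  · exact .inl (mem_openSegment_of_ne_left_right hqp (Ne.symm hqy) (mem_segment_iff_wbtw.2 h))

theorem segment_inter_subset_singleton_or {P : Set E}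
    (hP : ∀ p ∈ P, ∀ q ∈ P, ∀ x ∈ P, x ∈ openSegment ℝ p q → p = q) {u v x : E} (hxP : x ∈ P)
    (hx : x ∈ segment ℝ u v) :
    segment ℝ u x ∩ P ⊆ {x} ∨ segment ℝ v x ∩ P ⊆ {x} := by
  by_contra! h
  simp only [not_subset, mem_inter_iff, mem_singleton_iff] at h
  obtain ⟨⟨p, ⟨hpu, hpP⟩, hpx⟩, ⟨q, ⟨hqv, hqP⟩, hqx⟩⟩ := h
  have hpxq : Wbtw ℝ p x q :=
    ((mem_segment_iff_wbtw.1 hx).trans_left_right (mem_segment_iff_wbtw.1 hpu)).trans_right_left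
      (wbtw_comm.1 (mem_segment_iff_wbtw.1 hqv))
  obtain rfl := hP p hpP q hqP x hxP
    (mem_openSegment_of_ne_left_right hpx hqx (mem_segment_iff_wbtw.2 hpxq))
  exact hpx ((wbtw_self_iff ℝ).1 hpxq).symm

theorem injOn_of_segment_inter_subset_singleton {P S : Set E} {w : E} {z : E → E}
    (hz : ∀ x ∈ S, x ∈ segment ℝ w (z x) ∧ segment ℝ w x ∩ P ⊆ {x}) (hSP : S ⊆ P) :
    InjOn z S := by
  intro x hx y hy hxy
  have hy' : y ∈ segment ℝ w (z x) := hxy ▸ (hz y hy).1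
  rcases wbtw_or_wbtw_of_mem_segment (hz x hx).1 hy' with h | h
  · exact (hz y hy).2 ⟨mem_segment_iff_wbtw.2 h, hSP hx⟩
  · exact ((hz x hx).2 ⟨mem_segment_iff_wbtw.2 h, hSP hy⟩).symm

theorem finite_and_ncard_le_two_mul_of_segments {A P : Set E} (hA : A.Finite) (Z : E → Set E)
    (hZ : ∀ w, (Z w).encard ≤ 2)
    (hP : ∀ x ∈ P, x ∉ A → ∃ w ∈ A, ∃ z ∈ Z w, x ∈ segment ℝ w z ∧ segment ℝ w x ∩ P ⊆ {x}) :
    P.Finite ∧ P.ncard ≤ 2 * A.ncard := by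
  classical
  choose! w hwA z hzZ hz using hP
  set f : E → E := fun x => if x ∈ A then x else w x
  refine finite_and_ncard_le_mul_of_fibers hA (f := f) (fun x hx => ?_) fun a ha => ?_
  · by_cases hxA : x ∈ A
    · simp [f, hxA]
    · simpa [f, hxA] using hwA x hx hxA
  by_cases haP : a ∈ P
  · refine (encard_le_encard fun x hx => ?_).trans ((encard_singleton a).trans_le one_le_two)
    obtain ⟨hxP, hxa⟩ := hx
    by_cases hxA : x ∈ A
    · simpa [f, hxA] using hxa
    · simp only [f, hxA, if_false, mem_preimage, mem_singleton_iff] at hxa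
      subst hxa
      exact ((hz x hxP hxA).2 ⟨left_mem_segment ℝ _ _, haP⟩).symm
  · have hfib : ∀ x ∈ P ∩ f ⁻¹' {a}, x ∉ A ∧ w x = a := fun x ⟨hxP, hxa⟩ => by
      by_cases hxA : x ∈ A
      · simp only [f, hxA, if_true, mem_preimage, mem_singleton_iff] at hxa
        exact absurd (hxa ▸ hxP) haP
      · simpa [f, hxA] using hxa
    have hinj : InjOn z (P ∩ f ⁻¹' {a}) :=
      injOn_of_segment_inter_subset_singleton (w := a) (fun x hx => by
        obtain ⟨hxA, hwx⟩ := hfib x hx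
        exact hwx ▸ hz x hx.1 hxA) inter_subset_left
    calc (P ∩ f ⁻¹' {a}).encard = (z '' (P ∩ f ⁻¹' {a})).encard := hinj.encard_image.symm
      _ ≤ (Z a).encard := encard_le_encard (image_subset_iff.2 fun x hx => by
          obtain ⟨hxA, hwx⟩ := hfib x hx
          exact hwx ▸ hzZ x hx.1 hxA)
      _ ≤ 2 := hZ a

theorem affineIndependent_of_linearIndependent_sub {u a b : E}
    (h : LinearIndependent ℝ ![a - u, b - u]) : AffineIndependent ℝ ![u, a, b] := by
  rw [affineIndependent_iff_of_fintype]
  intro w hw hwv i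
  rw [Finset.weightedVSub_eq_linear_combination _ hw] at hwv
  simp only [Fin.sum_univ_three, Matrix.cons_val_zero, Matrix.cons_val_one,
    Matrix.cons_val_two, Matrix.head_cons, Matrix.tail_cons] at hw hwv
  have h12 := LinearIndependent.pair_iff.1 h (w 1) (w 2) (by
    rw [show w 0 = -(w 1) - w 2 by linarith] at hwv
    linear_combination (norm := module) hwv)
  fin_cases i <;> simp <;> linarith [h12.1, h12.2]

end Segment

variable {E : Type*} [NormedAddCommGroup E] [NormedSpace ℝ E] {K : Set E}

theorem Convex.segment_subset_frontier (hK : Convex ℝ K) {p q r : E} (hp : p ∈ K)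
    (hr : r ∈ K) (hq : q ∈ openSegment ℝ p r) (hqK : q ∉ interior K) :
    segment ℝ p r ⊆ frontier K := by
  intro y hy
  refine ⟨subset_closure (hK.segment_subset hp hr hy), fun hyK => hqK ?_⟩
  rcases eq_or_ne q y with rfl | hqy
  · exact hyK
  rcases mem_openSegment_or_of_mem_segment hq hy hqy with h | h
  · exact hK.openSegment_closure_interior_subset_interior (subset_closure hp) hyK h
  · exact hK.openSegment_interior_closure_subset_interior hyK (subset_closure hr) h

theorem Convex.segment_subset_frontier_inter {L : Set E} (hK : Convex ℝ K) (hKc : IsClosed K)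
    (hL : Convex ℝ L) (hLc : IsClosed L) {p q x : E} (hp : p ∈ frontier K ∩ frontier L)
    (hq : q ∈ frontier K ∩ frontier L) (hx : x ∈ frontier K ∩ frontier L)
    (hxpq : x ∈ openSegment ℝ p q) : segment ℝ p q ⊆ frontier K ∩ frontier L :=
  subset_inter
    (hK.segment_subset_frontier (hKc.frontier_subset hp.1) (hKc.frontier_subset hq.1) hxpq hx.1.2)
    (hL.segment_subset_frontier (hLc.frontier_subset hp.2) (hLc.frontier_subset hq.2) hxpq hx.2.2)

theorem Convex.add_smul_add_smul_mem_interior (hE : Module.finrank ℝ E = 2)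
    (hK : Convex ℝ K) {u a b : E} (hu : u ∈ K) (ha : a ∈ K) (hb : b ∈ K)
    (hind : LinearIndependent ℝ ![a - u, b - u]) {s t : ℝ} (hs : 0 < s) (ht : 0 < t)
    (hst : s + t < 1) : u + s • (a - u) + t • (b - u) ∈ interior K := by
  have : FiniteDimensional ℝ E := Module.finite_of_finrank_eq_succ hE
  have haff := affineIndependent_of_linearIndependent_sub hind
  let T : AffineBasis (Fin 3) ℝ E :=
    ⟨![u, a, b], haff, haff.affineSpan_eq_top_iff_card_eq_finrank_add_one.2 (by simp [hE])⟩
  have hw : ∑ i, ![1 - s - t, s, t] i = 1 := by simp [Fin.sum_univ_three]; ring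
  have hcomb : Finset.univ.affineCombination ℝ T ![1 - s - t, s, t] =
      u + s • (a - u) + t • (b - u) := by
    rw [show ⇑T = ![u, a, b] from rfl, Finset.affineCombination_eq_linear_combination _ _ _ hw]
    simp [Fin.sum_univ_three]
    module
  have hTK : convexHull ℝ (range T) ⊆ K := convexHull_min (by
    rintro _ ⟨i, rfl⟩; fin_cases i <;> assumption) hK
  refine interior_mono hTK ?_
  rw [T.interior_convexHull, ← hcomb]
  intro i
  rw [T.coord_apply_combination_of_mem (Finset.mem_univ i) hw]
  fin_cases i <;> simp <;> linarith

theorem Convex.not_linearIndependent_of_frontier_segments (hE : Module.finrank ℝ E = 2)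
    (hK : Convex ℝ K) (hKc : IsClosed K) {p q x y : E}
    (hpq : segment ℝ p q ⊆ frontier K) (hx : x ∈ openSegment ℝ p q)
    (hxy : segment ℝ x y ⊆ frontier K) : ¬ LinearIndependent ℝ ![q - p, y - x] := by
  intro hind
  rw [openSegment_eq_image'] at hx
  obtain ⟨l, hl, rfl⟩ := hx
  have hind' : LinearIndependent ℝ ![q - p, y - p] := by
    rw [LinearIndependent.pair_iff] at hind ⊢
    intro s t hst
    have h := hind (s + t * l) t (by rw [← hst]; module)
    exact ⟨by simpa [h.2] using h.1, h.2⟩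
  have hmid : p + l • (q - p) + (1 / 2 : ℝ) • (y - (p + l • (q - p))) ∈ frontier K :=
    hxy (by rw [segment_eq_image']; exact ⟨1 / 2, by norm_num, rfl⟩)
  apply hmid.2
  convert hK.add_smul_add_smul_mem_interior hE
    (hKc.frontier_subset (hpq (left_mem_segment ℝ p q)))
    (hKc.frontier_subset (hpq (right_mem_segment ℝ p q)))
    (hKc.frontier_subset (hxy (right_mem_segment ℝ _ y))) hind' (s := l / 2) (t := 1 / 2)
    (by linarith [hl.1]) one_half_pos (by linarith [hl.2])
    using 1
  module

theorem Convex.not_frontier_segment_of_mem_cone (hE : Module.finrank ℝ E = 2)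
    (hK : Convex ℝ K) (hKc : IsClosed K) {u a b c : E}
    (ha : segment ℝ u a ⊆ frontier K) (hb : segment ℝ u b ⊆ frontier K)
    (hind : LinearIndependent ℝ ![a - u, b - u]) {α β : ℝ} (hα : 0 < α) (hβ : 0 < β)
    (hc : c - u = α • (a - u) + β • (b - u)) : ¬ segment ℝ u c ⊆ frontier K := by
  intro huc
  set ε := 1 / (1 + α + β)
  have hε : 0 < ε := by positivity
  have hεαβ : ε * α + ε * β < 1 := by
    rw [← mul_add, div_mul_eq_mul_div, one_mul, div_lt_one (by positivity)]; linarith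
  have hmem : u + ε • (c - u) ∈ frontier K := huc (by
    rw [segment_eq_image']
    exact ⟨ε, ⟨hε.le, (div_le_one (by positivity)).2 (by linarith)⟩, rfl⟩)
  apply hmem.2
  convert hK.add_smul_add_smul_mem_interior hE
    (hKc.frontier_subset (ha (left_mem_segment ℝ u a)))
    (hKc.frontier_subset (ha (right_mem_segment ℝ u a)))
    (hKc.frontier_subset (hb (right_mem_segment ℝ u b))) hind
    (mul_pos hε hα) (mul_pos hε hβ) hεαβ using 1
  rw [hc]
  module

theorem Convex.not_frontier_segment_of_mem_neg_cone (hE : Module.finrank ℝ E = 2)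
    (hK : Convex ℝ K) (hKc : IsClosed K) {u a b c : E}
    (ha : segment ℝ u a ⊆ frontier K) (hb : segment ℝ u b ⊆ frontier K)
    (hind : LinearIndependent ℝ ![a - u, b - u]) {α β : ℝ} (hα : α < 0) (hβ : β < 0)
    (hc : c - u = α • (a - u) + β • (b - u)) : ¬ segment ℝ u c ⊆ frontier K := by
  intro huc
  set ε := 1 / (1 - α - β)
  have hε : 0 < ε := div_pos one_pos (by linarith)
  have hεαβ : ε * -α + ε * -β < 1 := by
    rw [← mul_add, div_mul_eq_mul_div, one_mul, div_lt_one (by linarith)]; linarith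
  -- `u` lies strictly between `c` and the interior point `u - ε • (c - u)`
  have hint : u + (ε * -α) • (a - u) + (ε * -β) • (b - u) ∈ interior K :=
    hK.add_smul_add_smul_mem_interior hE (hKc.frontier_subset (ha (left_mem_segment ℝ u a)))
      (hKc.frontier_subset (ha (right_mem_segment ℝ u a)))
      (hKc.frontier_subset (hb (right_mem_segment ℝ u b))) hind
      (mul_pos hε (neg_pos.2 hα)) (mul_pos hε (neg_pos.2 hβ)) hεαβ
  apply (ha (left_mem_segment ℝ u a)).2
  refine hK.openSegment_interior_closure_subset_interior hint
    (subset_closure (hKc.frontier_subset (huc (right_mem_segment ℝ u c))))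
    ⟨1 / (1 + ε), ε / (1 + ε), by positivity, by positivity, by field_simp, ?_⟩
  have hε1 : 1 + ε ≠ 0 := by positivity
  rw [show c = u + (α • (a - u) + β • (b - u)) by rw [← hc]; abel]
  match_scalars <;> field_simp <;> ring

theorem Convex.not_three_frontier_segments (hE : Module.finrank ℝ E = 2)
    (hK : Convex ℝ K) (hKc : IsClosed K) {u a b c : E}
    (ha : segment ℝ u a ⊆ frontier K) (hb : segment ℝ u b ⊆ frontier K)
    (hc : segment ℝ u c ⊆ frontier K) (hab : LinearIndependent ℝ ![a - u, b - u])
    (hac : LinearIndependent ℝ ![a - u, c - u]) (hbc : LinearIndependent ℝ ![b - u, c - u]) :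
    False := by
  have : FiniteDimensional ℝ E := Module.finite_of_finrank_eq_succ hE
  have hspan := hab.span_eq_top_of_card_eq_finrank' (by simp [hE])
  rw [Matrix.range_cons, Matrix.range_cons, Matrix.range_empty, union_empty,
    singleton_union] at hspan
  obtain ⟨α, β, hαβ⟩ := Submodule.mem_span_pair.1 (hspan ▸ Submodule.mem_top (x := c - u))
  have hα : α ≠ 0 := by
    rintro rfl
    simpa using (LinearIndependent.pair_iff.1 hbc β (-1) (by rw [← hαβ]; module)).2
  have hβ : β ≠ 0 := by
    rintro rfl
    simpa using (LinearIndependent.pair_iff.1 hac α (-1) (by rw [← hαβ]; module)).2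
  rcases hα.lt_or_gt with hα | hα <;> rcases hβ.lt_or_gt with hβ | hβ
  · exact hK.not_frontier_segment_of_mem_neg_cone hE hKc ha hb hab hα hβ hαβ.symm hc
  · refine hK.not_frontier_segment_of_mem_cone hE hKc hc ha
      (LinearIndependent.pair_symm_iff.1 hac) (α := 1 / β) (β := -α / β) (by positivity)
      (div_pos (by linarith) hβ) ?_ hb
    rw [← hαβ]; match_scalars <;> field_simp <;> ring
  · refine hK.not_frontier_segment_of_mem_cone hE hKc hc hb
      (LinearIndependent.pair_symm_iff.1 hbc) (α := 1 / α) (β := -β / α) (by positivity)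
      (div_pos (by linarith) hα) ?_ ha
    rw [← hαβ]; match_scalars <;> field_simp <;> ring
  · exact hK.not_frontier_segment_of_mem_cone hE hKc ha hb hab hα hβ hαβ.symm hc

structure IsEdge (K : Set E) (u v : E) : Prop where
  ne : u ≠ v
  segment_subset_frontier : segment ℝ u v ⊆ frontier K
  lineMap_preimage_subset : (lineMap u v : ℝ → E) ⁻¹' K ⊆ Icc 0 1

namespace IsEdge

variable {u v : E}

theorem symm (h : IsEdge K u v) : IsEdge K v u where
  ne := h.ne.symm
  segment_subset_frontier := segment_symm ℝ v u ▸ h.segment_subset_frontier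
  lineMap_preimage_subset t ht := by
    have := h.lineMap_preimage_subset (show lineMap u v (1 - t) ∈ K by
      rwa [lineMap_apply_one_sub])
    constructor <;> linarith [this.1, this.2]

theorem mem_Icc_of_sub_eq_smul (h : IsEdge K u v) {p : E} (hp : p ∈ K) {c : ℝ}
    (hc : p - u = c • (v - u)) : c ∈ Icc (0 : ℝ) 1 :=
  h.lineMap_preimage_subset (by rwa [mem_preimage, lineMap_apply_module', ← hc, sub_add_cancel])

theorem linearIndependent (hKc : IsClosed K) {z : E} (h : IsEdge K u v) (h' : IsEdge K u z)
    (hvz : v ≠ z) : LinearIndependent ℝ ![v - u, z - u] := by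
  refine (LinearIndependent.pair_iff' (sub_ne_zero.2 h.ne.symm)).2 fun c hc => hvz ?_
  have hc₁ := h.mem_Icc_of_sub_eq_smul
    (hKc.frontier_subset (h'.segment_subset_frontier (right_mem_segment ℝ u z))) hc.symm
  have hc₀ : c ≠ 0 := by
    rintro rfl
    exact h'.ne (sub_eq_zero.1 (hc.symm.trans (zero_smul ℝ _))).symm
  have hc₂ := h'.mem_Icc_of_sub_eq_smul
    (hKc.frontier_subset (h.segment_subset_frontier (right_mem_segment ℝ u v)))
    (c := c⁻¹) (by rw [← hc, smul_smul, inv_mul_cancel₀ hc₀, one_smul])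
  have hc1 : c = 1 := le_antisymm hc₁.2 ((inv_le_one₀ (hc₁.1.lt_of_ne' hc₀)).1 hc₂.2)
  simpa [hc1] using hc

theorem left_mem_extremePoints (hE : Module.finrank ℝ E = 2) (hK : Convex ℝ K)
    (hKc : IsClosed K) (h : IsEdge K u v) : u ∈ K.extremePoints ℝ := by
  have hu := h.segment_subset_frontier (left_mem_segment ℝ u v)
  refine mem_extremePoints_iff_left.2 ⟨hKc.frontier_subset hu, fun p hp q hq hupq => ?_⟩
  by_contra hpu
  have hpq : p ≠ q := by
    rintro rfl
    rw [openSegment_same] at hupq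
    exact hpu hupq.symm
  have hpq_fr := hK.segment_subset_frontier hp hq hupq hu.2
  have hpar := hK.not_linearIndependent_of_frontier_segments hE hKc hpq_fr hupq
    h.segment_subset_frontier
  obtain ⟨a, ha⟩ : ∃ a : ℝ, a • (q - p) = v - u := by
    simpa [LinearIndependent.pair_iff' (sub_ne_zero.2 hpq.symm)] using hpar
  rw [openSegment_eq_image'] at hupq
  obtain ⟨l, hl, rfl⟩ := hupq
  have ha₀ : a ≠ 0 := by
    rintro rfl
    exact h.ne (sub_eq_zero.1 (ha.symm.trans (zero_smul ℝ _))).symm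
  have hp₁ := h.mem_Icc_of_sub_eq_smul hp (c := -l / a) (by
    rw [← ha, smul_smul, div_mul_cancel₀ _ ha₀]; module)
  have hq₁ := h.mem_Icc_of_sub_eq_smul hq (c := (1 - l) / a) (by
    rw [← ha, smul_smul, div_mul_cancel₀ _ ha₀]; module)
  rcases ha₀.lt_or_gt with ha₀ | ha₀
  · exact absurd hq₁.1 (not_le.2 (div_neg_of_pos_of_neg (by linarith [hl.2]) ha₀))
  · exact absurd hp₁.1 (not_le.2 (div_neg_of_neg_of_pos (by linarith [hl.1]) ha₀))

end IsEdge

theorem encard_setOf_isEdge_le_two (hE : Module.finrank ℝ E = 2) (hK : Convex ℝ K)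
    (hKc : IsClosed K) (u : E) : {v | IsEdge K u v}.encard ≤ 2 := by
  by_contra! h
  obtain ⟨S, hS, hS3⟩ := exists_subset_encard_eq (Order.add_one_le_of_lt h)
  obtain ⟨a, b, c, hab, hac, hbc, rfl⟩ := encard_eq_three.1 hS3
  have ha : IsEdge K u a := hS (by simp)
  have hb : IsEdge K u b := hS (by simp)
  have hc : IsEdge K u c := hS (by simp)
  exact hK.not_three_frontier_segments hE hKc ha.segment_subset_frontier
    hb.segment_subset_frontier hc.segment_subset_frontier (ha.linearIndependent hKc hb hab)
    (ha.linearIndependent hKc hc hac) (hb.linearIndependent hKc hc hbc)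

theorem exists_isEdge_segment_subset (hK : Convex ℝ K) (hKc : IsCompact K)
    {p q : E} (hpq : p ≠ q) (hseg : segment ℝ p q ⊆ frontier K) :
    ∃ u v, IsEdge K u v ∧ segment ℝ p q ⊆ segment ℝ u v := by
  set ℓ : ℝ →ᵃ[ℝ] E := lineMap p q
  set T := ℓ ⁻¹' K
  have hT₀ : (0 : ℝ) ∈ T := by
    simpa [T, ℓ] using hKc.isClosed.frontier_subset (hseg (left_mem_segment ℝ p q))
  have hT₁ : (1 : ℝ) ∈ T := by
    simpa [T, ℓ] using hKc.isClosed.frontier_subset (hseg (right_mem_segment ℝ p q))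
  have hTb : Bornology.IsBounded T :=
    (antilipschitzWith_lineMap hpq).isBounded_preimage hKc.isBounded
  have hTc : IsClosed T := hKc.isClosed.preimage (lineMap_continuous (p := p) (q := q))
  have hT : T = Icc (sInf T) (sSup T) :=
    eq_Icc_csInf_csSup_of_connected_bdd_closed
      ⟨⟨0, hT₀⟩, (hK.affine_preimage ℓ).isPreconnected⟩ hTb.bddBelow hTb.bddAbove hTc
  have h₀ : sInf T ≤ 0 := csInf_le hTb.bddBelow hT₀
  have h₁ : 1 ≤ sSup T := le_csSup hTb.bddAbove hT₁
  have himage : ∀ {a b : ℝ}, a ≤ b → ℓ '' Icc a b = segment ℝ (ℓ a) (ℓ b) := fun hab => by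
    rw [← segment_eq_Icc hab, image_segment]
  refine ⟨ℓ (sInf T), ℓ (sSup T), ⟨fun h => ?_, ?_, fun t ht => ?_⟩, ?_⟩
  · exact (lineMap_injective ℝ hpq h).not_lt (by linarith) |>.elim
  · refine hK.segment_subset_frontier (q := ℓ (1 / 2))
      (hT.ge (left_mem_Icc.2 (by linarith))) (hT.ge (right_mem_Icc.2 (by linarith))) ?_ (hseg ?_).2
    · rw [← image_openSegment, openSegment_eq_Ioo (by linarith)]
      exact ⟨1 / 2, ⟨by linarith, by linarith⟩, rfl⟩
    · rw [segment_eq_image_lineMap]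
      exact ⟨1 / 2, ⟨by norm_num, by norm_num⟩, rfl⟩
  · have hTt : lineMap (sInf T) (sSup T) t ∈ Icc (sInf T) (sSup T) := by
      rw [← hT]
      show ℓ _ ∈ K
      rwa [ℓ.apply_lineMap]
    rw [lineMap_apply_module', smul_eq_mul] at hTt
    constructor <;> nlinarith [hTt.1, hTt.2]
  · calc segment ℝ p q = ℓ '' Icc 0 1 := by simp [himage zero_le_one, ℓ]
      _ ⊆ ℓ '' Icc (sInf T) (sSup T) := image_mono (Icc_subset_Icc h₀ h₁)
      _ = _ := himage (by linarith)

theorem exists_isEdge_of_notMem_extremePoints (hK : Convex ℝ K) (hKc : IsCompact K)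
    {x : E} (hx : x ∈ frontier K) (hxK : x ∉ K.extremePoints ℝ) :
    ∃ u v, IsEdge K u v ∧ x ∈ segment ℝ u v := by
  obtain ⟨p, hp, q, hq, hxpq, hpx⟩ : ∃ p ∈ K, ∃ q ∈ K, x ∈ openSegment ℝ p q ∧ p ≠ x := by
    simpa [mem_extremePoints_iff_left, hKc.isClosed.frontier_subset hx] using hxK
  have hpq : p ≠ q := by
    rintro rfl
    rw [openSegment_same] at hxpq
    exact hpx hxpq.symm
  obtain ⟨u, v, huv, hsub⟩ :=
    exists_isEdge_segment_subset hK hKc hpq (hK.segment_subset_frontier hp hq hxpq hx.2)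
  exact ⟨u, v, huv, hsub (openSegment_subset_segment ℝ p q hxpq)⟩

theorem frontier_inter_frontier_finite_general
    (A B : Set (EuclideanSpace ℝ (Fin 2))) (hA : A.Finite) (hB : B.Finite)
    (hnoseg : ¬ ∃ p q : EuclideanSpace ℝ (Fin 2), p ≠ q ∧
      segment ℝ p q ⊆ frontier (convexHull ℝ A) ∩ frontier (convexHull ℝ B)) :
    (frontier (convexHull ℝ A) ∩ frontier (convexHull ℝ B)).Finite ∧
      (frontier (convexHull ℝ A) ∩ frontier (convexHull ℝ B)).ncard ≤ 2 * A.ncard := by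
  have hE : Module.finrank ℝ (EuclideanSpace ℝ (Fin 2)) = 2 := finrank_euclideanSpace_fin
  have hK := convex_convexHull ℝ A
  have hKc : IsCompact (convexHull ℝ A) := hA.isCompact_convexHull ℝ
  set P := frontier (convexHull ℝ A) ∩ frontier (convexHull ℝ B)
  have hP : ∀ p ∈ P, ∀ q ∈ P, ∀ x ∈ P, x ∈ openSegment ℝ p q → p = q :=
    fun p hp q hq x hx hxpq => by_contra fun hpq => hnoseg ⟨p, q, hpq,
      hK.segment_subset_frontier_inter hKc.isClosed (convex_convexHull ℝ B)
        (hB.isClosed_convexHull ℝ) hp hq hx hxpq⟩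
  have hA_of_isEdge {u v} (h : IsEdge (convexHull ℝ A) u v) : u ∈ A :=
    extremePoints_convexHull_subset (h.left_mem_extremePoints hE hK hKc.isClosed)
  refine finite_and_ncard_le_two_mul_of_segments hA (fun w => {z | IsEdge (convexHull ℝ A) w z})
    (encard_setOf_isEdge_le_two hE hK hKc.isClosed) fun x hx hxA => ?_
  obtain ⟨u, v, huv, hxuv⟩ := exists_isEdge_of_notMem_extremePoints hK hKc hx.1
    fun h => hxA (extremePoints_convexHull_subset h)
  rcases segment_inter_subset_singleton_or hP hx hxuv with h | h
  · exact ⟨u, hA_of_isEdge huv, v, huv, hxuv, h⟩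
  · exact ⟨v, hA_of_isEdge huv.symm, u, huv.symm, segment_symm ℝ u v ▸ hxuv, h⟩

/-- If the convex hulls of two finite sets `A, B` both have nonempty interior and
their boundaries share no nondegenerate segment, then the two boundaries intersect
in a finite set of at most `2·|A|` points. -/
theorem frontier_inter_frontier_finite
    (A B : Set (EuclideanSpace ℝ (Fin 2))) (hA : A.Finite) (hB : B.Finite)
    (hintA : (interior (convexHull ℝ A)).Nonempty)
    (hintB : (interior (convexHull ℝ B)).Nonempty)
    (hnoseg : ¬ ∃ p q : EuclideanSpace ℝ (Fin 2), p ≠ q ∧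
      segment ℝ p q ⊆ frontier (convexHull ℝ A) ∩ frontier (convexHull ℝ B)) :
    (frontier (convexHull ℝ A) ∩ frontier (convexHull ℝ B)).Finite ∧
      (frontier (convexHull ℝ A) ∩ frontier (convexHull ℝ B)).ncard ≤ 2 * A.ncard :=
  frontier_inter_frontier_finite_general A B hA hB hnoseg
end

section
/- Let S be a finite subset of ℝ² such that convexHull(S) has nonempty interior. Then the frontier of convexHull(S) equals the union of all closed segments [p,q] with p, q ∈ S, p ≠ q, such that [p,q] is contained in the frontier of convexHull(S). -/
/-! By Carathéodory, a boundary point `x` of `K = conv S` is a positive combination of affinely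
independent points of `S`. Three such points would put `x` in the interior of their triangle, so
either `x ∈ S` or `x` lies in an open segment `(p, q)` with `p, q ∈ S`; in the latter case a
supporting functional at `x` is constant on `[p, q]`, which therefore lies in the boundary.
The points of `S` are reached by closedness: the union of the finitely many edges is closed, and
the boundary of a planar convex body has no isolated points, since every small circle around a
boundary point is connected and meets both `K` and its complement. -/

open Set Metric Module

theorem IsPreconnected.inter_frontier_nonempty {X : Type*} [TopologicalSpace X] {s t : Set X}
    (hs : IsPreconnected s) (hst : (s ∩ t).Nonempty) (hst' : (s \ t).Nonempty) :
    (s ∩ frontier t).Nonempty := by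
  rw [frontier_eq_closure_inter_closure]
  refine isPreconnected_closed_iff.1 hs _ _ isClosed_closure isClosed_closure ?_
    (hst.mono (inter_subset_inter_right s subset_closure))
    (hst'.mono (inter_subset_inter_right s subset_closure))
  intro x _
  by_cases hx : x ∈ t
  exacts [Or.inl (subset_closure hx), Or.inr (subset_closure hx)]

variable {E : Type*} [NormedAddCommGroup E] [NormedSpace ℝ E]

theorem Set.Finite.isClosed_setOf_exists_mem_segment {S : Set E} (hS : S.Finite)
    (P : E → E → Prop) : IsClosed {x | ∃ p ∈ S, ∃ q ∈ S, P p q ∧ x ∈ segment ℝ p q} := by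
  have h : {x | ∃ p ∈ S, ∃ q ∈ S, P p q ∧ x ∈ segment ℝ p q} =
      ⋃ p ∈ S, ⋃ q ∈ S, ⋃ (_ : P p q), segment ℝ p q := by
    ext; simp [and_left_comm]
  rw [h]
  refine hS.isClosed_biUnion fun p _ => hS.isClosed_biUnion fun q _ =>
    isClosed_iUnion_of_finite fun _ => ?_
  rw [← convexHull_pair (𝕜 := ℝ)]
  exact ((toFinite _).isCompact_convexHull ℝ).isClosed

theorem AffineIndependent.sum_smul_mem_interior_convexHull [FiniteDimensional ℝ E] {ι : Type*}
    [Fintype ι] {z : ι → E} (hz : AffineIndependent ℝ z) (hcard : Fintype.card ι = finrank ℝ E + 1)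
    {w : ι → ℝ} (hw : ∀ i, 0 < w i) (hw1 : ∑ i, w i = 1) :
    ∑ i, w i • z i ∈ interior (convexHull ℝ (range z)) := by
  let b : AffineBasis ι ℝ E := ⟨z, hz, hz.affineSpan_eq_top_iff_card_eq_finrank_add_one.2 hcard⟩
  change _ ∈ interior (convexHull ℝ (range b))
  rw [b.interior_convexHull]
  intro i
  rw [← Finset.univ.affineCombination_eq_linear_combination z w hw1]
  exact (b.coord_apply_combination_of_mem (Finset.mem_univ i) hw1).symm ▸ hw i

theorem AffineIndependent.card_le_finrank_of_sum_smul_notMem_interior [FiniteDimensional ℝ E]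
    {ι : Type*} [Fintype ι] {z : ι → E} (hz : AffineIndependent ℝ z) {w : ι → ℝ}
    (hw : ∀ i, 0 < w i) (hw1 : ∑ i, w i = 1)
    (hx : ∑ i, w i • z i ∉ interior (convexHull ℝ (range z))) :
    Fintype.card ι ≤ finrank ℝ E := by
  have := hz.card_le_finrank_succ.trans (Nat.succ_le_succ (Submodule.finrank_le _))
  by_contra h
  exact hx (hz.sum_smul_mem_interior_convexHull (by omega) hw hw1)

theorem exists_mem_openSegment_of_notMem_interior_convexHull [FiniteDimensional ℝ E]
    (hE : finrank ℝ E = 2) {S : Set E} {x : E} (hx : x ∈ convexHull ℝ S)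
    (hxi : x ∉ interior (convexHull ℝ S)) (hxS : x ∉ S) :
    ∃ p ∈ S, ∃ q ∈ S, p ≠ q ∧ x ∈ openSegment ℝ p q := by
  classical
  obtain ⟨ι, _, z, w, hzS, hz, hw, hw1, rfl⟩ := eq_pos_convex_span_of_mem_convexHull hx
  have hcard : Fintype.card ι ≤ 2 := hE ▸ hz.card_le_finrank_of_sum_smul_notMem_interior hw hw1
    fun h => hxi (interior_mono (convexHull_mono hzS) h)
  interval_cases h : Fintype.card ι
  · simp [Fintype.card_eq_zero_iff.1 h] at hw1
  · obtain ⟨i, hi⟩ := Fintype.card_eq_one_iff.1 h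
    have : Subsingleton ι := ⟨fun j k => (hi j).trans (hi k).symm⟩
    rw [Fintype.sum_subsingleton _ i] at hw1 hxS
    exact absurd (hzS ⟨i, by simp [hw1]⟩) hxS
  · obtain ⟨i, j, hij, huniv⟩ := Finset.card_eq_two.1 h
    rw [huniv, Finset.sum_pair hij] at hw1 ⊢
    exact ⟨z i, hzS ⟨i, rfl⟩, z j, hzS ⟨j, rfl⟩, hz.injective.ne hij,
      w i, w j, hw i, hw j, hw1, rfl⟩

namespace Convex

variable {K : Set E}

theorem exists_forall_le_of_notMem_interior (hK : Convex ℝ K) (hint : (interior K).Nonempty)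
    {x : E} (hx : x ∉ interior K) :
    ∃ f : E →L[ℝ] ℝ, (∀ y ∈ interior K, f y < f x) ∧ ∀ y ∈ K, f y ≤ f x := by
  obtain ⟨f, hf⟩ := geometric_hahn_banach_open_point hK.interior isOpen_interior hx
  refine ⟨f, hf, fun y hy => ?_⟩
  have hy' : y ∈ closure (interior K) :=
    hK.closure_interior_eq_closure_of_nonempty_interior hint ▸ subset_closure hy
  exact closure_lt_subset_le f.continuous continuous_const (closure_mono hf hy')

theorem segment_subset_frontier_s14 (hK : Convex ℝ K) {p q x : E} (hp : p ∈ K) (hq : q ∈ K)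
    (hx : x ∈ openSegment ℝ p q) (hxK : x ∉ interior K) : segment ℝ p q ⊆ frontier K := by
  intro y hy
  refine ⟨subset_closure (hK.segment_subset hp hq hy), fun hyK => ?_⟩
  obtain ⟨f, hf_int, hf_le⟩ := hK.exists_forall_le_of_notMem_interior ⟨y, hyK⟩ hxK
  have hfy := hf_int y hyK
  have hfp := hf_le p hp
  have hfq := hf_le q hq
  obtain ⟨a, b, ha, hb, hab, rfl⟩ := hx
  obtain ⟨c, d, hc, hd, hcd, rfl⟩ := hy
  simp only [map_add, map_smul, smul_eq_mul] at hfy hfp hfq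
  have hpq : f p = f q := by
    obtain rfl : a = 1 - b := by linarith
    exact le_antisymm (by nlinarith) (by nlinarith)
  rw [hpq, ← add_mul, ← add_mul, hab, hcd] at hfy
  exact hfy.false

theorem sphere_inter_frontier_nonempty (hK : Convex ℝ K) (hKc : IsClosed K)
    (hE : 1 < Module.rank ℝ E) {p a : E} (hp : p ∈ frontier K) (ha : a ∈ K) {r : ℝ} (hr : 0 < r)
    (hra : r ≤ dist a p) : (sphere p r ∩ frontier K).Nonempty := by
  have hpK : p ∈ K := hKc.frontier_subset hp
  have hray : ∀ y ≠ p, p + (r / dist y p) • (y - p) ∈ sphere p r := fun y hy => by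
    rw [mem_sphere, dist_eq_norm, add_sub_cancel_left, norm_smul, ← dist_eq_norm,
      Real.norm_of_nonneg (by positivity), div_mul_cancel₀ _ (dist_ne_zero.2 hy)]
  refine (isConnected_sphere hE p hr.le).isPreconnected.inter_frontier_nonempty ?_ ?_
  · have hap : a ≠ p := by rintro rfl; simp at hra; linarith
    refine ⟨_, hray a hap, hK.segment_subset hpK ha ?_⟩
    rw [segment_eq_image']
    exact ⟨r / dist a p, ⟨by positivity, div_le_one_of_le₀ hra dist_nonneg⟩, rfl⟩
  · rw [← frontier_compl] at hp
    obtain ⟨z, hzK, hzp⟩ := Metric.mem_closure_iff.1 (frontier_subset_closure hp) r hr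
    have hzp' : z ≠ p := by rintro rfl; exact hzK hpK
    -- `z` lies between `p` and the point where the ray from `p` through `z` meets the sphere
    refine ⟨_, hray z hzp', fun hy => hzK (hK.segment_subset hpK hy ?_)⟩
    rw [segment_eq_image']
    refine ⟨dist z p / r, ⟨by positivity, div_le_one_of_le₀ (dist_comm p z ▸ hzp.le) hr.le⟩, ?_⟩
    dsimp only
    rw [add_sub_cancel_left, smul_smul, div_mul_div_cancel₀ hr.ne', div_self (dist_ne_zero.2 hzp'),
      one_smul, add_sub_cancel]

theorem frontier_subset_closure_frontier_diff (hK : Convex ℝ K) (hKc : IsClosed K)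
    (hE : 1 < Module.rank ℝ E) (hint : (interior K).Nonempty) {S : Set E} (hS : S.Finite) :
    frontier K ⊆ closure (frontier K \ S) := by
  intro p hp
  obtain ⟨a, ha⟩ := hint
  have hap : 0 < dist a p := dist_pos.2 fun h => hp.2 (h ▸ ha)
  rw [Metric.mem_closure_iff]
  intro ε hε
  obtain ⟨r, ⟨hr0, hr⟩, hrS⟩ := ((Ioo_infinite (lt_min hε hap)).sdiff (hS.image (dist p))).nonempty
  obtain ⟨y, hy, hyK⟩ := hK.sphere_inter_frontier_nonempty hKc hE hp (interior_subset ha) hr0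
    (hr.le.trans (min_le_right _ _))
  rw [mem_sphere, dist_comm] at hy
  exact ⟨y, ⟨hyK, fun hyS => hrS ⟨y, hyS, hy⟩⟩, hy ▸ hr.trans_le (min_le_left _ _)⟩

end Convex

/-- The boundary of the convex hull of a finite set `S` (with nonempty interior)
is covered by, and equal to, the union of the segments between points of `S`
that lie entirely on the boundary. -/
theorem frontier_convexHull_eq_union_edges
    (S : Set (EuclideanSpace ℝ (Fin 2))) (hS : S.Finite)
    (hint : (interior (convexHull ℝ S)).Nonempty) :
    frontier (convexHull ℝ S) =
      {x : EuclideanSpace ℝ (Fin 2) | ∃ p ∈ S, ∃ q ∈ S, p ≠ q ∧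
        segment ℝ p q ⊆ frontier (convexHull ℝ S) ∧ x ∈ segment ℝ p q} := by
  set K := convexHull ℝ S
  have hK : Convex ℝ K := convex_convexHull ℝ S
  have hKc : IsClosed K := hS.isClosed_convexHull (𝕜 := ℝ)
  refine Subset.antisymm ?_ fun x ⟨p, _, q, _, _, hpq, hx⟩ => hpq hx
  have hedges : frontier K \ S ⊆ {x | ∃ p ∈ S, ∃ q ∈ S, p ≠ q ∧
      segment ℝ p q ⊆ frontier K ∧ x ∈ segment ℝ p q} := by
    rintro x ⟨hx, hxS⟩
    obtain ⟨p, hp, q, hq, hpq, hxpq⟩ := exists_mem_openSegment_of_notMem_interior_convexHull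
      finrank_euclideanSpace_fin (hKc.frontier_subset hx) hx.2 hxS
    exact ⟨p, hp, q, hq, hpq, hK.segment_subset_frontier_s14 (subset_convexHull ℝ S hp)
      (subset_convexHull ℝ S hq) hxpq hx.2, openSegment_subset_segment _ _ _ hxpq⟩
  have hrank : 1 < Module.rank ℝ (EuclideanSpace ℝ (Fin 2)) := by
    rw [← finrank_eq_rank, finrank_euclideanSpace_fin]; norm_num
  calc frontier K ⊆ closure (frontier K \ S) :=
        hK.frontier_subset_closure_frontier_diff hKc hrank hint hS
    _ ⊆ _ := closure_minimal hedges <| by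
      simpa only [and_assoc] using
        hS.isClosed_setOf_exists_mem_segment fun p q => p ≠ q ∧ segment ℝ p q ⊆ frontier K
end
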